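/- Every strictly alternating bargraph with at least two H steps can be uniquely decomposed as G = U^a G₁ H G₂ D^a, where a ≥ 1, G₁ is a strictly alternating bargraph, and U G₂ D is a strictly alternating bargraph; here a is the height of the lowest H step of G and the displayed H is the leftmost H step at height a. -/

import Mathlib

/-- Steps of bargraphs / Motzkin paths. -/
inductive Step where
  | U : Step
  | H : Step
  | D : Step
deriving DecidableEq

/-- Vertical displacement of a step. -/
def Step.val : Step → ℤ
  | .U => 1
  | .H => 0
  | .D => -1

/-- Mirror of a step (swap U and D). -/
def Step.mirror : Step → Step
  | .U => .D
  | .H => .H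
  | .D => .U

/-- Final height of a word. -/
def hgt (w : List Step) : ℤ := (w.map Step.val).sum

/-- A Motzkin path prefix: never goes below the x-axis. -/
def IsMotzkinPrefix (w : List Step) : Prop := ∀ p : List Step, p <+: w → 0 ≤ hgt p

/-- A Motzkin path: never below the x-axis, ends at height 0. -/
def IsMotzkin (w : List Step) : Prop := IsMotzkinPrefix w ∧ hgt w = 0

/-- No peak `UD` and no valley `DU`. -/
def Cornerless (w : List Step) : Prop :=
  ¬ [Step.U, Step.D] <:+: w ∧ ¬ [Step.D, Step.U] <:+: w

/-- A bargraph: starts at the origin, ends on the x-axis, stays strictly above the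
x-axis except at the endpoints, and has no factor `UD` or `DU`. -/
def IsBargraph (w : List Step) : Prop :=
  2 ≤ w.length ∧ hgt w = 0 ∧
    (∀ p : List Step, p <+: w → p ≠ [] → p ≠ w → 0 < hgt p) ∧ Cornerless w

/-- Semiperimeter: number of `U` steps plus number of `H` steps. -/
def semi (w : List Step) : ℕ := w.count Step.U + w.count Step.H

/-- Length of the initial run of `U` steps. -/
def leadU : List Step → ℕ
  | Step.U :: rest => leadU rest + 1
  | _ => 0

/-- Length of the initial run of `H` steps. -/
def leadH : List Step → ℕ
  | Step.H :: rest => leadH rest + 1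
  | _ => 0

/-- Length of the initial run of `D` steps. -/
def leadD : List Step → ℕ
  | Step.D :: rest => leadD rest + 1
  | _ => 0

/-- Length of the first maximal run of `D` steps (0 if none). -/
def firstDescLen : List Step → ℕ
  | [] => 0
  | Step.D :: rest => leadD rest + 1
  | _ :: rest => firstDescLen rest

/-- Number of occurrences of the two-letter factor `a b`. -/
def cnt2 (a b : Step) : List Step → ℕ
  | x :: y :: rest => (if x = a ∧ y = b then 1 else 0) + cnt2 a b (y :: rest)
  | _ => 0

/-- Heights of the columns (`H` steps), starting from a given height. -/
def colHeights : ℤ → List Step → List ℤ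
  | _, [] => []
  | h, Step.U :: rest => colHeights (h + 1) rest
  | h, Step.H :: rest => h :: colHeights h rest
  | h, Step.D :: rest => colHeights (h - 1) rest

/-- Width of the leftmost maximal horizontal segment (0 if none). -/
def lhsW : List Step → ℕ
  | [] => 0
  | Step.H :: rest => leadH rest + 1
  | _ :: rest => lhsW rest

/-- Delete `h` steps at the start of the leftmost horizontal segment. -/
def stripLeadH (h : ℕ) : List Step → List Step
  | [] => []
  | Step.H :: rest => List.drop h (Step.H :: rest)
  | s :: rest => s :: stripLeadH h rest

/-- Number of initial columns of height 1: largest `j` such that the word begins `U H^j`. -/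
def iuc : List Step → ℕ
  | Step.U :: rest => leadH rest
  | _ => 0

/-- Number of maximal horizontal segments. -/
def hsCount : List Step → ℕ
  | [] => 0
  | [Step.H] => 1
  | [_] => 0
  | a :: b :: rest => (if a = Step.H ∧ b ≠ Step.H then 1 else 0) + hsCount (b :: rest)

/-- Mirror image: reverse the word and swap `U` with `D`. -/
def mir (w : List Step) : List Step := (w.reverse).map Step.mirror

/-- Shape of strictly alternating bargraphs:
`U^{i₁} H D^{k₁} H U^{i₂} H D^{k₂} H ⋯ U^{iₘ} H D^{kₘ}` with all `iᵣ, kᵣ ≥ 1`. -/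
inductive SAShape : List Step → Prop where
  | base (i k : ℕ) : 1 ≤ i → 1 ≤ k →
      SAShape (List.replicate i Step.U ++ [Step.H] ++ List.replicate k Step.D)
  | cons (i k : ℕ) (w : List Step) : 1 ≤ i → 1 ≤ k → SAShape w →
      SAShape (List.replicate i Step.U ++ [Step.H] ++ List.replicate k Step.D ++ [Step.H] ++ w)

/-- A strictly alternating bargraph. -/
def IsStrictAlt (w : List Step) : Prop := IsBargraph w ∧ SAShape w

/-- A secondary structure on `{0, …, m-1}`: all consecutive edges are present, every
vertex has at most one non-consecutive neighbour, and there are no crossing edges. -/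
def IsSecondaryStructure {m : ℕ} (G : SimpleGraph (Fin m)) : Prop :=
  (∀ i j : Fin m, (i : ℕ) + 1 = (j : ℕ) → G.Adj i j) ∧
  (∀ i j k : Fin m, G.Adj i j → G.Adj i k →
      (i : ℕ) + 1 ≠ (j : ℕ) → (j : ℕ) + 1 ≠ (i : ℕ) →
      (i : ℕ) + 1 ≠ (k : ℕ) → (k : ℕ) + 1 ≠ (i : ℕ) → j = k) ∧
  ¬ ∃ i j k l : Fin m, (i : ℕ) < (j : ℕ) ∧ (j : ℕ) < (k : ℕ) ∧ (k : ℕ) < (l : ℕ) ∧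
      G.Adj i k ∧ G.Adj j l

/-- Generating function of bargraphs: `x` (variable 0) marks `H` steps,
`y` (variable 1) marks `U` steps. -/
noncomputable def BG : MvPowerSeries (Fin 2) ℚ :=
  fun d => (Nat.card {w : List Step //
    IsBargraph w ∧ w.count Step.H = d 0 ∧ w.count Step.U = d 1} : ℚ)

/-- Generating function of cornerless Motzkin paths. -/
noncomputable def MG : MvPowerSeries (Fin 2) ℚ :=
  fun d => (Nat.card {w : List Step //
    IsMotzkin w ∧ Cornerless w ∧ w.count Step.H = d 0 ∧ w.count Step.U = d 1} : ℚ)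

/-- Generating function of bargraphs avoiding the factor `DH`. -/
noncomputable def BDH : MvPowerSeries (Fin 2) ℚ :=
  fun d => (Nat.card {w : List Step //
    IsBargraph w ∧ ¬ [Step.D, Step.H] <:+: w ∧
      w.count Step.H = d 0 ∧ w.count Step.U = d 1} : ℚ)

/-- Generating function of bargraphs avoiding the factors `DH` and `HH`. -/
noncomputable def BDHHH : MvPowerSeries (Fin 2) ℚ :=
  fun d => (Nat.card {w : List Step //
    IsBargraph w ∧ ¬ [Step.D, Step.H] <:+: w ∧ ¬ [Step.H, Step.H] <:+: w ∧
      w.count Step.H = d 0 ∧ w.count Step.U = d 1} : ℚ)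

/-- Generating function of cornerless Motzkin path prefixes ending at height `h`. -/
noncomputable def Pgf (h : ℕ) : MvPowerSeries (Fin 2) ℚ :=
  fun d => (Nat.card {w : List Step //
    IsMotzkinPrefix w ∧ Cornerless w ∧ hgt w = (h : ℤ) ∧
      w.count Step.H = d 0 ∧ w.count Step.U = d 1} : ℚ)

/-- Decomposition `G = U^a G₁ H G₂ D^a` of a strictly alternating bargraph. -/
def SADecomp (t : ℕ × List Step × List Step) (G : List Step) : Prop :=
  1 ≤ t.1 ∧ IsStrictAlt t.2.1 ∧ IsStrictAlt (Step.U :: (t.2.2 ++ [Step.D])) ∧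
    G = List.replicate t.1 Step.U ++ t.2.1 ++ [Step.H] ++ t.2.2 ++
      List.replicate t.1 Step.D


/-!
A strictly alternating word is `U^i H (D^{k₁} H U^{i₁} H) ⋯ (D^{kₙ} H U^{iₙ} H) D^k`, and it is
a bargraph exactly when it ends at height `0` and its valley columns (the `H` steps after a
descent) lie strictly above the axis, since every other interior vertex is at least as high as
a neighbouring valley column. With at least two `H` steps there is a valley; cutting at the
leftmost lowest one, of height `a`, and removing `U^a` in front and `D^a` at the end leaves `G₁`,
whose valleys stay above `a`, and `G₂`, whose valleys stay at or above `a`, so `U G₂ D` is again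
a bargraph. Conversely, in any decomposition the displayed `H` is a lowest column and every
column of `U^a G₁` is higher, so it is the leftmost lowest column of `G`: this gives uniqueness.
-/

open List

@[simp] lemma Step.val_U : Step.U.val = 1 := rfl
@[simp] lemma Step.val_H : Step.H.val = 0 := rfl
@[simp] lemma Step.val_D : Step.D.val = -1 := rfl

@[simp] lemma hgt_nil : hgt [] = 0 := rfl

@[simp] lemma hgt_cons (s : Step) (w : List Step) : hgt (s :: w) = s.val + hgt w := by
  simp [hgt]

@[simp] lemma hgt_append (u v : List Step) : hgt (u ++ v) = hgt u + hgt v := by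
  simp [hgt]

@[simp] lemma hgt_replicate (n : ℕ) (s : Step) : hgt (replicate n s) = n * s.val := by
  simp [hgt]

def StrictlyAbove : ℤ → List Step → Prop
  | _, [] => True
  | h, s :: w => 0 < h + s.val ∧ StrictlyAbove (h + s.val) w

section StrictlyAbove

variable {h : ℤ} {u v w : List Step}

@[simp] lemma strictlyAbove_nil (h : ℤ) : StrictlyAbove h [] := trivial

@[simp] lemma strictlyAbove_cons {s : Step} :
    StrictlyAbove h (s :: w) ↔ 0 < h + s.val ∧ StrictlyAbove (h + s.val) w := Iff.rfl

lemma strictlyAbove_append :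
    StrictlyAbove h (u ++ v) ↔ StrictlyAbove h u ∧ StrictlyAbove (h + hgt u) v := by
  induction u generalizing h with
  | nil => simp
  | cons s u ih => simp [ih, and_assoc, add_assoc]

lemma strictlyAbove_iff_prefix :
    StrictlyAbove h w ↔ ∀ p, p <+: w → p ≠ [] → 0 < h + hgt p := by
  induction w generalizing h with
  | nil => simp
  | cons s w ih =>
    simp only [strictlyAbove_cons, ih, prefix_cons_iff]
    constructor
    · rintro ⟨hs, hw⟩ p (rfl | ⟨q, rfl, hq⟩) hp
      · exact absurd rfl hp
      · rcases eq_or_ne q [] with rfl | hq'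
        · simpa using hs
        · simpa [add_assoc] using hw q hq hq'
    · intro H
      refine ⟨by simpa using H [s] (.inr ⟨[], rfl, nil_prefix⟩) (by simp), fun q hq hq' => ?_⟩
      simpa [add_assoc] using H (s :: q) (.inr ⟨q, rfl, hq⟩) (by simp)

lemma strictlyAbove_replicate_U (hh : 0 ≤ h) (n : ℕ) :
    StrictlyAbove h (replicate n Step.U) := by
  induction n with
  | zero => trivial
  | succ n ih =>
    rw [replicate_succ', strictlyAbove_append]
    simp only [ih, hgt_replicate, Step.val_U, mul_one, strictlyAbove_cons, strictlyAbove_nil,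
      true_and, and_true]
    positivity

lemma strictlyAbove_replicate_D (n : ℕ) :
    StrictlyAbove h (replicate n Step.D) ↔ n = 0 ∨ (n : ℤ) < h := by
  induction n with
  | zero => simp
  | succ n ih =>
    rw [replicate_succ', strictlyAbove_append, ih]
    simp only [hgt_replicate, Step.val_D, mul_neg, mul_one, strictlyAbove_cons,
      lt_add_neg_iff_add_lt, zero_add, strictlyAbove_nil, and_true, Nat.add_eq_zero_iff,
      one_ne_zero, and_false, Nat.cast_add, Nat.cast_one, false_or]
    omega

end StrictlyAbove

/-- `D^k H U^i H` for `b = (k, i)`: from a peak column through a valley to the next peak. -/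
def valleySeg (b : ℕ × ℕ) : List Step :=
  replicate b.1 Step.D ++ Step.H :: (replicate b.2 Step.U ++ [Step.H])

/-- `U^i H (D^{k₁} H U^{i₁} H) ⋯ (D^{kₙ} H U^{iₙ} H) D^k` for `vs = [(k₁, i₁), …, (kₙ, iₙ)]`. -/
def blockWord (i : ℕ) (vs : List (ℕ × ℕ)) (k : ℕ) : List Step :=
  replicate i Step.U ++ Step.H :: (vs.flatMap valleySeg ++ replicate k Step.D)

/-- Heights of the valley columns of `vs.flatMap valleySeg` started at height `h`. -/
def valleys (h : ℤ) : List (ℕ × ℕ) → List ℤ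
  | [] => []
  | b :: vs => (h - b.1) :: valleys (h - b.1 + b.2) vs

@[simp] lemma hgt_valleySeg (b : ℕ × ℕ) : hgt (valleySeg b) = b.2 - b.1 := by
  simp only [valleySeg, hgt_append, hgt_replicate, hgt_cons, hgt_nil, Step.val_D, Step.val_H,
    Step.val_U]
  ring

@[simp] lemma hgt_blockWord (i : ℕ) (vs : List (ℕ × ℕ)) (k : ℕ) :
    hgt (blockWord i vs k) = i + hgt (vs.flatMap valleySeg) - k := by
  simp only [blockWord, hgt_append, hgt_replicate, hgt_cons, Step.val_U, Step.val_H, Step.val_D]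
  ring

lemma valleys_append (h : ℤ) (xs ys : List (ℕ × ℕ)) :
    valleys h (xs ++ ys) = valleys h xs ++ valleys (h + hgt (xs.flatMap valleySeg)) ys := by
  induction xs generalizing h with
  | nil => simp [valleys]
  | cons b xs ih =>
    simp only [cons_append, valleys, ih, flatMap_cons, hgt_append, hgt_valleySeg]
    ring_nf

lemma valleys_add (h d : ℤ) (vs : List (ℕ × ℕ)) :
    valleys (h + d) vs = (valleys h vs).map (· + d) := by
  induction vs generalizing h with
  | nil => rfl
  | cons b vs ih =>
    simp only [valleys, map_cons, ← ih, cons.injEq]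
    constructor <;> ring_nf

lemma strictlyAbove_valleySeg (h : ℤ) (b : ℕ × ℕ) :
    StrictlyAbove h (valleySeg b) ↔ (b.1 : ℤ) < h := by
  simp only [valleySeg, strictlyAbove_append, strictlyAbove_replicate_D, strictlyAbove_cons,
    hgt_replicate, Step.val_D, Step.val_H]
  constructor
  · rintro ⟨_, h1, _⟩; omega
  · intro h1
    refine ⟨by omega, by omega, strictlyAbove_replicate_U (by omega) _, ?_⟩
    simp only [Step.val_U, mul_one, mul_neg, add_zero, strictlyAbove_nil, and_true]
    omega

lemma strictlyAbove_flatMap_valleySeg (h : ℤ) (vs : List (ℕ × ℕ)) :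
    StrictlyAbove h (vs.flatMap valleySeg) ↔ ∀ v ∈ valleys h vs, 0 < v := by
  induction vs generalizing h with
  | nil => simp [valleys]
  | cons b vs ih =>
    rw [flatMap_cons, strictlyAbove_append, strictlyAbove_valleySeg, hgt_valleySeg]
    simp only [valleys, mem_cons, forall_eq_or_imp, sub_pos]
    refine and_congr_right fun _ => ?_
    rw [ih]
    ring_nf

lemma saShape_blockWord {i k : ℕ} {vs : List (ℕ × ℕ)} (hi : 1 ≤ i) (hk : 1 ≤ k)
    (hvs : ∀ b ∈ vs, 1 ≤ b.1 ∧ 1 ≤ b.2) : SAShape (blockWord i vs k) := by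
  induction vs generalizing i with
  | nil => simpa [blockWord] using SAShape.base i k hi hk
  | cons b vs ih =>
    have hb := hvs b mem_cons_self
    have := SAShape.cons i b.1 _ hi hb.1 (ih hb.2 fun c hc => hvs c (mem_cons_of_mem b hc))
    simpa [blockWord, valleySeg] using this

lemma SAShape.exists_eq_blockWord {w : List Step} (h : SAShape w) :
    ∃ i vs k, 1 ≤ i ∧ 1 ≤ k ∧ (∀ b ∈ vs, 1 ≤ b.1 ∧ 1 ≤ b.2) ∧ w = blockWord i vs k := by
  induction h with
  | base i k hi hk => exact ⟨i, [], k, hi, hk, by simp, by simp [blockWord]⟩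
  | cons i k _ hi hk _ ih =>
    obtain ⟨i', vs, k', hi', hk', hvs, rfl⟩ := ih
    refine ⟨i, (k, i') :: vs, k', hi, hk', ?_, by simp [blockWord, valleySeg]⟩
    simpa [hk, hi'] using hvs

def Step.SameOrFlat (x y : Step) : Prop := x = y ∨ x = Step.H ∨ y = Step.H

lemma cornerless_of_isChain {w : List Step} (h : w.IsChain Step.SameOrFlat) : Cornerless w :=
  ⟨fun hw => by simpa [Step.SameOrFlat] using h.infix hw,
    fun hw => by simpa [Step.SameOrFlat] using h.infix hw⟩

lemma isChain_append_H_cons {u v : List Step} (hu : u.IsChain Step.SameOrFlat)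
    (hv : v.IsChain Step.SameOrFlat) : (u ++ Step.H :: v).IsChain Step.SameOrFlat :=
  hu.append (isChain_cons.2 ⟨fun _ _ => .inr (.inl rfl), hv⟩)
    fun _ _ _ hy => .inr (.inr (by simpa using hy.symm))

lemma isChain_replicate_sameOrFlat (n : ℕ) (s : Step) :
    (replicate n s).IsChain Step.SameOrFlat :=
  isChain_replicate_of_rel n (.inl rfl)

lemma cornerless_blockWord (i : ℕ) (vs : List (ℕ × ℕ)) (k : ℕ) :
    Cornerless (blockWord i vs k) := by
  refine cornerless_of_isChain (isChain_append_H_cons (isChain_replicate_sameOrFlat _ _) ?_)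
  induction vs with
  | nil => simpa using isChain_replicate_sameOrFlat k Step.D
  | cons b vs ih =>
    simp only [flatMap_cons, valleySeg, append_assoc, cons_append]
    exact isChain_append_H_cons (isChain_replicate_sameOrFlat _ _)
      (isChain_append_H_cons (isChain_replicate_sameOrFlat _ _) ih)

lemma isBargraph_concat_iff {w : List Step} (s : Step) :
    IsBargraph (w ++ [s]) ↔
      1 ≤ w.length ∧ hgt (w ++ [s]) = 0 ∧ StrictlyAbove 0 w ∧ Cornerless (w ++ [s]) := by
  have hprefix : (∀ p, p <+: w ++ [s] → p ≠ [] → p ≠ w ++ [s] → 0 < hgt p) ↔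
      StrictlyAbove 0 w := by
    rw [strictlyAbove_iff_prefix]
    simp only [prefix_concat_iff, zero_add]
    refine ⟨fun H p hp hne => H p (.inr hp) hne ?_, fun H p hp hne hpw => ?_⟩
    · rintro rfl
      simpa using hp.length_le
    · exact H p (hp.resolve_left hpw) hne
  simp [IsBargraph, hprefix]

lemma strictlyAbove_blockWord {i : ℕ} (hi : 1 ≤ i) (vs : List (ℕ × ℕ)) (k : ℕ) :
    StrictlyAbove 0 (blockWord i vs k) ↔
      (∀ v ∈ valleys i vs, 0 < v) ∧ (k = 0 ∨ (k : ℤ) < i + hgt (vs.flatMap valleySeg)) := by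
  simp only [blockWord, strictlyAbove_append, strictlyAbove_replicate_U le_rfl, true_and,
    strictlyAbove_cons, hgt_replicate, Step.val_U, Step.val_H, mul_one, zero_add, add_zero,
    strictlyAbove_flatMap_valleySeg, strictlyAbove_replicate_D]
  exact and_iff_right (by omega)

theorem isStrictAlt_blockWord_iff {i k : ℕ} {vs : List (ℕ × ℕ)} (hi : 1 ≤ i) (hk : 1 ≤ k)
    (hvs : ∀ b ∈ vs, 1 ≤ b.1 ∧ 1 ≤ b.2) :
    IsStrictAlt (blockWord i vs k) ↔ hgt (blockWord i vs k) = 0 ∧ ∀ v ∈ valleys i vs, 0 < v := by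
  obtain ⟨k, rfl⟩ := Nat.exists_eq_add_of_le' hk
  have hw : blockWord i vs (k + 1) = blockWord i vs k ++ [Step.D] := by
    simp [blockWord, replicate_succ']
  rw [IsStrictAlt, and_iff_left (saShape_blockWord hi hk hvs), hw, isBargraph_concat_iff,
    strictlyAbove_blockWord hi, ← hw]
  simp only [cornerless_blockWord, and_true, hgt_blockWord]
  constructor
  · rintro ⟨-, h0, ⟨hv, -⟩⟩
    exact ⟨h0, hv⟩
  · rintro ⟨h0, hv⟩
    have hlen : 1 ≤ (blockWord i vs k).length := by
      simp only [blockWord, length_append, length_replicate, length_cons]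
      omega
    refine ⟨hlen, h0, hv, ?_⟩
    push_cast at h0
    omega

lemma exists_leftmost_min_valley (h : ℤ) (b : ℕ × ℕ) (vs : List (ℕ × ℕ)) :
    ∃ pre c suf, b :: vs = pre ++ c :: suf ∧
      (∀ v ∈ valleys h pre, h + hgt (pre.flatMap valleySeg) - c.1 < v) ∧
      ∀ v ∈ valleys h (b :: vs), h + hgt (pre.flatMap valleySeg) - c.1 ≤ v := by
  induction vs generalizing h b with
  | nil => exact ⟨[], b, [], rfl, by simp [valleys], by simp [valleys]⟩
  | cons b' vs ih =>
    obtain ⟨pre, c, suf, hsplit, hlt, hle⟩ := ih (h - b.1 + b.2) b'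
    by_cases hb : h - b.1 ≤ h - b.1 + b.2 + hgt (pre.flatMap valleySeg) - c.1
    · refine ⟨[], b, b' :: vs, rfl, by simp [valleys], ?_⟩
      simp only [valleys, mem_cons, forall_eq_or_imp, flatMap_nil, hgt_nil, add_zero] at hle ⊢
      exact ⟨le_rfl, by linarith, fun v hv => by linarith [hle.2 v hv]⟩
    · refine ⟨b :: pre, c, suf, by rw [hsplit, cons_append], ?_, ?_⟩
      · simp only [valleys, mem_cons, forall_eq_or_imp, flatMap_cons, hgt_append, hgt_valleySeg]
        exact ⟨by linarith, fun v hv => by linarith [hlt v hv]⟩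
      · simp only [valleys, mem_cons, forall_eq_or_imp, flatMap_cons, hgt_append,
          hgt_valleySeg] at hle ⊢
        exact ⟨by linarith, by linarith, fun v hv => by linarith [hle.2 v hv]⟩

/-- The last peak lies above every valley. -/
lemma lt_add_hgt_flatMap_valleySeg {a h : ℤ} {vs : List (ℕ × ℕ)} (hvs : ∀ b ∈ vs, 1 ≤ b.2)
    (ha : a < h) (hv : ∀ v ∈ valleys h vs, a ≤ v) : a < h + hgt (vs.flatMap valleySeg) := by
  induction vs generalizing h with
  | nil => simpa
  | cons b vs ih =>
    simp only [valleys, mem_cons, forall_eq_or_imp] at hv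
    have hb : (1 : ℤ) ≤ b.2 := by exact_mod_cast hvs b mem_cons_self
    have := ih (fun c hc => hvs c (mem_cons_of_mem b hc)) (by linarith) hv.2
    simp only [flatMap_cons, hgt_append, hgt_valleySeg]
    linarith

lemma blockWord_append_cons {a i k : ℕ} (hai : a ≤ i) (hak : a ≤ k) (pre suf : List (ℕ × ℕ))
    (c : ℕ × ℕ) :
    blockWord i (pre ++ c :: suf) k = replicate a Step.U ++ blockWord (i - a) pre c.1 ++
      [Step.H] ++ blockWord c.2 suf (k - a) ++ replicate a Step.D := by
  obtain ⟨i, rfl⟩ := Nat.exists_eq_add_of_le hai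
  obtain ⟨k, rfl⟩ := Nat.exists_eq_add_of_le hak
  rw [blockWord, replicate_add, add_comm a k, replicate_add]
  simp [blockWord, valleySeg, -replicate_append_replicate]

lemma cons_U_blockWord_concat_D (i : ℕ) (vs : List (ℕ × ℕ)) (k : ℕ) :
    Step.U :: (blockWord i vs k ++ [Step.D]) = blockWord (i + 1) vs (k + 1) := by
  rw [blockWord, blockWord, replicate_succ, replicate_succ']
  simp

/-- Cutting at the leftmost lowest valley `c`, of height `a`. -/
lemma saDecomp_blockWord_append_cons {a i k : ℕ} {pre suf : List (ℕ × ℕ)} {c : ℕ × ℕ}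
    (ha : 1 ≤ a) (hai : a < i) (hak : a ≤ k) (hc : 1 ≤ c.1 ∧ 1 ≤ c.2)
    (hpre : ∀ b ∈ pre, 1 ≤ b.1 ∧ 1 ≤ b.2) (hsuf : ∀ b ∈ suf, 1 ≤ b.1 ∧ 1 ≤ b.2)
    (hvalley : (a : ℤ) = i + hgt (pre.flatMap valleySeg) - c.1)
    (h0 : hgt (blockWord i (pre ++ c :: suf) k) = 0)
    (hlt : ∀ v ∈ valleys i pre, a < v) (hle : ∀ v ∈ valleys (a + c.2) suf, a ≤ v) :
    SADecomp (a, blockWord (i - a) pre c.1, blockWord c.2 suf (k - a))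
      (blockWord i (pre ++ c :: suf) k) := by
  simp only [hgt_blockWord, flatMap_append, flatMap_cons, hgt_append, hgt_valleySeg] at h0
  refine ⟨ha, ?_, ?_, blockWord_append_cons hai.le hak pre suf c⟩
  · have hv := valleys_add i (-(a : ℤ)) pre
    rw [← sub_eq_add_neg, ← Nat.cast_sub hai.le] at hv
    rw [isStrictAlt_blockWord_iff (by omega) hc.1 hpre, hgt_blockWord, hv, Nat.cast_sub hai.le]
    refine ⟨by linarith, fun v hv => ?_⟩
    obtain ⟨w, hw, rfl⟩ := mem_map.1 hv
    linarith [hlt w hw]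
  · have hv := valleys_add (a + c.2) (1 - a) suf
    rw [show (a + c.2 + (1 - a) : ℤ) = ((c.2 + 1 : ℕ) : ℤ) by push_cast; ring] at hv
    rw [cons_U_blockWord_concat_D, isStrictAlt_blockWord_iff (by omega) (by omega) hsuf,
      hgt_blockWord, hv]
    refine ⟨by push_cast [Nat.cast_sub hak]; linarith, fun v hv => ?_⟩
    obtain ⟨w, hw, rfl⟩ := mem_map.1 hv
    linarith [hle w hw]

lemma exists_saDecomp {G : List Step} (hG : IsStrictAlt G) (hH : 2 ≤ G.count Step.H) :
    ∃ t, SADecomp t G := by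
  obtain ⟨i, vs, k, hi, hk, hvs, rfl⟩ := hG.2.exists_eq_blockWord
  obtain ⟨h0, hpos⟩ := (isStrictAlt_blockWord_iff hi hk hvs).1 hG
  obtain ⟨b, vs, rfl⟩ : ∃ b vs', vs = b :: vs' := by
    cases vs with
    | nil => simp [blockWord, count_replicate] at hH
    | cons b vs => exact ⟨b, vs, rfl⟩
  obtain ⟨pre, c, suf, hsplit, hlt, hle⟩ := exists_leftmost_min_valley i b vs
  set a : ℤ := i + hgt (pre.flatMap valleySeg) - c.1 with ha
  have hvalleys : valleys i (b :: vs) = valleys i pre ++ a :: valleys (a + c.2) suf := by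
    rw [hsplit, valleys_append, valleys]
  have hsuf_valleys : ∀ v ∈ valleys (a + c.2) suf, a ≤ v :=
    fun v hv => hle v (by rw [hvalleys]; simp [hv])
  rw [hsplit] at hvs h0 ⊢
  have hc := hvs c (by simp)
  have hsuf : ∀ d ∈ suf, 1 ≤ d.1 ∧ 1 ≤ d.2 := fun d hd => hvs d (by simp [hd])
  have ha_pos : 0 < a := hpos a (by rw [hvalleys]; simp)
  have ha_lt_i : a < i := by
    have := hle _ mem_cons_self
    have := (hvs b (by rw [← hsplit]; exact mem_cons_self)).1
    omega
  have ha_lt_k : a < k := by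
    have := lt_add_hgt_flatMap_valleySeg (fun d hd => (hsuf d hd).2) (by omega) hsuf_valleys
    simp only [hgt_blockWord, flatMap_append, flatMap_cons, hgt_append, hgt_valleySeg] at h0
    linarith
  clear_value a
  lift a to ℕ using ha_pos.le
  exact ⟨_, saDecomp_blockWord_append_cons (by omega) (by omega) (by omega) hc
    (fun d hd => hvs d (by simp [hd])) hsuf ha h0 hlt hsuf_valleys⟩

lemma colHeights_append (h : ℤ) (u v : List Step) :
    colHeights h (u ++ v) = colHeights h u ++ colHeights (h + hgt u) v := by
  induction u generalizing h with
  | nil => simp [colHeights]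
  | cons s u ih => cases s <;> simp [colHeights, ih, add_assoc, sub_eq_add_neg]

lemma colHeights_add (h d : ℤ) (w : List Step) :
    colHeights (h + d) w = (colHeights h w).map (· + d) := by
  induction w generalizing h with
  | nil => rfl
  | cons s w ih => cases s <;> simp [colHeights, ← ih, add_right_comm _ d, sub_eq_add_neg]

lemma colHeights_replicate {s : Step} (hs : s ≠ Step.H) (h : ℤ) (n : ℕ) :
    colHeights h (replicate n s) = [] := by
  induction n generalizing h with
  | zero => rfl
  | succ n ih => cases s <;> simp_all [replicate_succ, colHeights]

lemma mem_colHeights_iff {h c : ℤ} {w : List Step} :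
    c ∈ colHeights h w ↔ ∃ p q, w = p ++ Step.H :: q ∧ c = h + hgt p := by
  refine ⟨fun hc => ?_, fun ⟨p, q, hw, hc⟩ => by simp [hw, hc, colHeights_append, colHeights]⟩
  induction w generalizing h with
  | nil => simp [colHeights] at hc
  | cons s w ih =>
    cases s <;> simp only [colHeights, mem_cons] at hc
    · obtain ⟨p, q, rfl, rfl⟩ := ih hc
      exact ⟨Step.U :: p, q, rfl, by rw [hgt_cons, Step.val_U]; ring⟩
    · rcases hc with rfl | hc
      · exact ⟨[], w, rfl, by simp⟩
      · obtain ⟨p, q, rfl, rfl⟩ := ih hc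
        exact ⟨Step.H :: p, q, rfl, by simp⟩
    · obtain ⟨p, q, rfl, rfl⟩ := ih hc
      exact ⟨Step.D :: p, q, rfl, by rw [hgt_cons, Step.val_D]; ring⟩

lemma IsBargraph.pos_of_mem_colHeights {w : List Step} (hw : IsBargraph w) {c : ℤ}
    (hc : c ∈ colHeights 0 w) : 0 < c := by
  obtain ⟨p, q, rfl, rfl⟩ := mem_colHeights_iff.1 hc
  obtain ⟨hlen, -, hpos, -⟩ := hw
  rcases eq_or_ne p [] with rfl | hp
  · have := hpos [Step.H] ⟨q, rfl⟩ (by simp) fun h => by simp [← h] at hlen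
    simp at this
  · simpa using hpos p (prefix_append _ _) hp (by simp)

lemma nonneg_of_mem_colHeights {w : List Step} (hw : IsBargraph (Step.U :: (w ++ [Step.D])))
    {c : ℤ} (hc : c ∈ colHeights 0 w) : 0 ≤ c := by
  have := hw.pos_of_mem_colHeights (c := c + 1) <| by
    simp only [colHeights, colHeights_append, append_nil]
    rw [← zero_add 1, colHeights_add]
    exact mem_map_of_mem hc
  omega

section SADecomp

variable {a : ℕ} {G G₁ G₂ : List Step}

lemma SADecomp.eq_append_H_cons (hd : SADecomp (a, G₁, G₂) G) :
    G = (replicate a Step.U ++ G₁) ++ Step.H :: (G₂ ++ replicate a Step.D) := by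
  simp [hd.2.2.2]

lemma SADecomp.hgt_prefix (hd : SADecomp (a, G₁, G₂) G) :
    hgt (replicate a Step.U ++ G₁) = a := by
  simp [hd.2.1.1.2.1]

lemma SADecomp.colHeights_eq (hd : SADecomp (a, G₁, G₂) G) :
    colHeights 0 G =
      (colHeights 0 G₁).map (· + (a : ℤ)) ++ (a : ℤ) :: (colHeights 0 G₂).map (· + (a : ℤ)) := by
  have hG₂ : hgt G₂ = 0 := by simpa using hd.2.2.1.1.2.1
  rw [hd.eq_append_H_cons, colHeights_append, hd.hgt_prefix]
  simp [colHeights, colHeights_append, colHeights_replicate, hG₂, ← colHeights_add]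

lemma SADecomp.lowest_column (hd : SADecomp (a, G₁, G₂) G) :
    (a : ℤ) ∈ colHeights 0 G ∧ (∀ c ∈ colHeights 0 G, (a : ℤ) ≤ c) ∧
      ∀ c ∈ colHeights 0 (replicate a Step.U ++ G₁), (a : ℤ) < c := by
  have hG₁ : ∀ {c}, c ∈ colHeights 0 G₁ → 0 < c := hd.2.1.1.pos_of_mem_colHeights
  have hG₂ : ∀ {c}, c ∈ colHeights 0 G₂ → 0 ≤ c := nonneg_of_mem_colHeights hd.2.2.1.1
  refine ⟨by simp [hd.colHeights_eq], fun c hc => ?_, fun c hc => ?_⟩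
  · simp only [hd.colHeights_eq, mem_append, mem_cons, mem_map] at hc
    rcases hc with ⟨x, hx, rfl⟩ | rfl | ⟨x, hx, rfl⟩
    · linarith [hG₁ hx]
    · exact le_rfl
    · linarith [hG₂ hx]
  · rw [colHeights_append, colHeights_replicate (by simp), nil_append, hgt_replicate,
      Step.val_U, mul_one, ← zero_add (a : ℤ), colHeights_add] at hc
    obtain ⟨x, hx, rfl⟩ := mem_map.1 hc
    linarith [hG₁ hx]

lemma SADecomp.unique {t t' : ℕ × List Step × List Step} (hd : SADecomp t G)
    (hd' : SADecomp t' G) : t = t' := by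
  wlog hlen : (replicate t.1 Step.U ++ t.2.1).length ≤ (replicate t'.1 Step.U ++ t'.2.1).length
    generalizing t t'
  · exact (this hd' hd (le_of_not_ge hlen)).symm
  obtain ⟨a, G₁, G₂⟩ := t
  obtain ⟨a', G₁', G₂'⟩ := t'
  have hG := hd.eq_append_H_cons
  have hG' := hd'.eq_append_H_cons
  obtain ⟨r, hr⟩ := prefix_of_prefix_length_le ⟨_, hG.symm⟩ ⟨_, hG'.symm⟩ hlen
  rw [← hr, hG, append_assoc (replicate a Step.U ++ G₁) r, append_right_inj] at hG'
  cases r with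
  | nil =>
    have haa : a = a' := by
      have : (a : ℤ) = a' := by rw [← hd.hgt_prefix, ← hd'.hgt_prefix, ← hr, append_nil]
      exact_mod_cast this
    subst haa
    rw [append_nil, append_right_inj] at hr
    simpa [hr] using hG'
  | cons x r =>
    obtain ⟨rfl, -⟩ := cons_eq_cons.1 hG'
    have hcol : (a : ℤ) ∈ colHeights 0 (replicate a' Step.U ++ G₁') := by
      rw [← hr, ← hd.hgt_prefix, ← zero_add (hgt _)]
      exact mem_colHeights_iff.2 ⟨_, r, by simp, rfl⟩
    have := hd'.lowest_column.2.2 _ hcol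
    have := hd.lowest_column.2.1 _ hd'.lowest_column.1
    omega

end SADecomp

/-- every strictly alternating bargraph with at least two `H` steps
decomposes uniquely as `G = U^a G₁ H G₂ D^a` with `a ≥ 1`, `G₁` strictly alternating
and `U G₂ D` strictly alternating; moreover `a` is the height of the lowest `H` step
of `G` and the displayed `H` is the leftmost `H` step at height `a`. -/
theorem strictAlt_decomposition :
    ∀ G : List Step, IsStrictAlt G → 2 ≤ G.count Step.H →
      (∃! t : ℕ × List Step × List Step, SADecomp t G) ∧
      (∀ t : ℕ × List Step × List Step, SADecomp t G →
        (t.1 : ℤ) ∈ colHeights 0 G ∧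
        (∀ c ∈ colHeights 0 G, (t.1 : ℤ) ≤ c) ∧
        (∀ c ∈ colHeights 0 (List.replicate t.1 Step.U ++ t.2.1),
          (t.1 : ℤ) < c)) := by
  intro G hG hH
  obtain ⟨t, ht⟩ := exists_saDecomp hG hH
  exact ⟨⟨t, ht, fun t' ht' => ht'.unique ht⟩, fun ⟨_, _, _⟩ ht => ht.lowest_column⟩
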